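/- arXiv:2206.02640 — 10 statements merged into one kernel-verified Lean document; each statement's English description precedes it below -/
import Mathlib

section
/- Let H ≥ 1, α_k = (H+1)/(H+k), and α_k^t = α_t ∏_{i=t+1}^{k}(1-α_i). Then for every t ≥ 1, ∑_{k=t}^{∞} α_k^t ≤ 1 + 1/H. -/
open Finset

theorem alpha_weights_tsum_bound
    (H : ℕ) (hH : 1 ≤ H)
    (α : ℕ → ℝ) (hα : ∀ k, α k = (H + 1 : ℝ) / (H + k))
    (αw : ℕ → ℕ → ℝ)
    (hαw : ∀ k t, αw k t = α t * ∏ i ∈ Finset.Icc (t + 1) k, (1 - α i)) :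
    ∀ t ≥ 1, ∑' j : ℕ, αw (t + j) t ≤ 1 + 1 / (H : ℝ) := by
  intro t ht
  have hHpos : (0:ℝ) < H := by exact_mod_cast hH
  have hHne : (H:ℝ) ≠ 0 := ne_of_gt hHpos
  set e : ℕ → ℝ := fun n => ∏ i ∈ Icc (t + 1) (t + n), (((i:ℝ) - 1) / ((H:ℝ) + i - 1))
    with he_def
  have he0 : e 0 = 1 := by
    simp [he_def, Finset.Icc_eq_empty_of_lt (Nat.lt_succ_self t)]
  have he_nonneg : ∀ n, 0 ≤ e n := by
    intro n
    apply Finset.prod_nonneg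
    intro i hi
    have hi1 : t + 1 ≤ i := (Finset.mem_Icc.mp hi).1
    have hi1' : (1:ℝ) ≤ i := by exact_mod_cast Nat.one_le_of_lt (Nat.lt_of_lt_of_le (Nat.lt_succ_of_le (Nat.le_of_lt_succ (Nat.lt_succ_of_le ht))) hi1)
    apply div_nonneg (by linarith)
    linarith
  have he_succ : ∀ n, e (n + 1) = e n * (((t:ℝ) + n) / ((H:ℝ) + t + n)) := by
    intro n
    have h1 : t + 1 ≤ t + n + 1 := by omega
    have : e (n + 1) = e n * (((t + n + 1 : ℕ):ℝ) - 1) / ((H:ℝ) + (t + n + 1 : ℕ) - 1) := by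
      simp only [he_def]
      rw [show t + (n + 1) = (t + n) + 1 from rfl, Finset.prod_Icc_succ_top h1]
      ring
    rw [this]
    push_cast
    ring
  have hden : ∀ n : ℕ, (0:ℝ) < (H:ℝ) + t + n := by
    intro n
    have : (0:ℝ) ≤ (t:ℝ) := Nat.cast_nonneg t
    have : (0:ℝ) ≤ (n:ℝ) := Nat.cast_nonneg n
    positivity
  have key : ∀ n, αw (t + n) t = (1 + 1 / (H:ℝ)) * e n * ((H:ℝ) / ((H:ℝ) + t + n)) := by
    intro n
    induction n with
    | zero =>
      rw [hαw, hα, he0]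
      simp [Finset.Icc_eq_empty_of_lt (Nat.lt_succ_self t)]
      have h := hden 0
      push_cast at h ⊢
      field_simp
    | succ n ih =>
      have hrec : αw (t + (n + 1)) t = αw (t + n) t * (1 - α (t + n + 1)) := by
        rw [hαw, hαw, show t + (n + 1) = (t + n) + 1 from rfl,
          Finset.prod_Icc_succ_top (by omega : t + 1 ≤ t + n + 1)]
        ring
      rw [hrec, ih, he_succ, hα]
      have h1 := hden n
      have h2 := hden (n + 1)
      push_cast at h2 ⊢
      have h2' : (H:ℝ) + ((t:ℝ) + (n:ℝ) + 1) ≠ 0 := by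
        intro hc; apply ne_of_gt h2; linarith
      field_simp
      ring
  have hnonneg : ∀ n, 0 ≤ αw (t + n) t := by
    intro n
    rw [key n]
    have h1 := hden n
    have h2 := he_nonneg n
    positivity
  have htel : ∀ n, αw (t + n) t
      = (1 + 1 / (H:ℝ)) * e n - (1 + 1 / (H:ℝ)) * e (n + 1) := by
    intro n
    rw [key n, he_succ n]
    have h1 := hden n
    field_simp
    ring
  apply Real.tsum_le_of_sum_range_le hnonneg
  intro n
  calc ∑ j ∈ Finset.range n, αw (t + j) t
      = ∑ j ∈ Finset.range n,
        ((1 + 1 / (H:ℝ)) * e j - (1 + 1 / (H:ℝ)) * e (j + 1)) :=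
        Finset.sum_congr rfl (fun j _ => htel j)
    _ = (1 + 1 / (H:ℝ)) * e 0 - (1 + 1 / (H:ℝ)) * e n :=
        Finset.sum_range_sub' (fun j => (1 + 1 / (H:ℝ)) * e j) n
    _ ≤ 1 + 1 / (H:ℝ) := by
        rw [he0]
        have h1 := he_nonneg n
        have h2 : (0:ℝ) ≤ 1 + 1 / (H:ℝ) := by positivity
        nlinarith
end

section
/- Let H ≥ 1, α_k = (H+1)/(H+k), α_k^t = α_t ∏_{i=t+1}^k (1-α_i), and define A_k = ∑_{t=1}^k α_k^t α_t². Then A_k ≥ α_k² for all k ≥ 1. -/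
open Finset

theorem A_k_ge_alpha_k_sq
    (H : ℕ) (hH : 1 ≤ H)
    (α : ℕ → ℝ) (hα : ∀ k, α k = (H + 1 : ℝ) / (H + k))
    (αw : ℕ → ℕ → ℝ)
    (hαw : ∀ k t, αw k t = α t * ∏ i ∈ Finset.Icc (t + 1) k, (1 - α i))
    (A : ℕ → ℝ) (hA : ∀ k, A k = ∑ t ∈ Finset.Icc 1 k, αw k t * (α t) ^ 2) :
    ∀ k ≥ 1, A k ≥ (α k) ^ 2 := by
  intro k hk
  induction k, hk using Nat.le_induction with
  | base =>
    have h1 : α 1 = 1 := by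
      rw [hα]; push_cast
      have : (H : ℝ) + 1 ≠ 0 := by positivity
      field_simp
    rw [hA]
    simp [hαw, h1]
  | succ k hk ih =>
    have hkpos : (0:ℝ) < (H:ℝ) + k := by positivity
    have hk1pos : (0:ℝ) < (H:ℝ) + (k+1) := by positivity
    have ha : α (k+1) = (H+1:ℝ)/(H+(k+1)) := by rw [hα]; push_cast; ring_nf
    have hb : α k = (H+1:ℝ)/(H+k) := by rw [hα]
    have ha_pos : 0 < α (k+1) := by rw [ha]; positivity
    have ha_le : α (k+1) ≤ 1 := by
      rw [ha, div_le_one hk1pos]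
      have : (0:ℝ) ≤ (k:ℝ) := Nat.cast_nonneg k
      linarith
    have hba : α (k+1) ≤ α k := by
      rw [ha, hb]
      apply div_le_div_of_nonneg_left (by positivity) hkpos
      linarith
    -- recursion
    have hrec : A (k+1) = (1 - α (k+1)) * A k + (α (k+1))^3 := by
      rw [hA (k+1), Finset.sum_Icc_succ_top (by omega : 1 ≤ k+1)]
      have htail : αw (k+1) (k+1) = α (k+1) := by
        rw [hαw]
        rw [Finset.Icc_eq_empty (by omega)]
        simp
      rw [htail, hA k, Finset.mul_sum]
      have hsum : ∀ t ∈ Finset.Icc 1 k,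
          αw (k+1) t * α t ^ 2 = (1 - α (k+1)) * (αw k t * α t ^ 2) := by
        intro t ht
        simp only [Finset.mem_Icc] at ht
        rw [hαw (k+1) t, hαw k t,
          Finset.prod_Icc_succ_top (by omega : t + 1 ≤ k + 1)]
        ring
      rw [Finset.sum_congr rfl hsum]
      ring
    rw [hrec]
    have hbk : A k ≥ (α k)^2 := ih
    have haa : (α (k+1))^2 ≤ A k :=
      le_trans (pow_le_pow_left₀ ha_pos.le hba 2) hbk
    nlinarith [mul_le_mul_of_nonneg_left haa (sub_nonneg.mpr ha_le)]
end

section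
/- Let H ≥ 1, α_k = (H+1)/(H+k), α_k^t = α_t ∏_{i=t+1}^k(1-α_i), and A_k = ∑_{t=1}^k α_k^t α_t². Then the sequence A_k is non-increasing: A_{k+1} ≤ A_k for all k ≥ 1. -/
open Finset

theorem A_k_nonincreasing
    (H : ℕ) (hH : 1 ≤ H)
    (α : ℕ → ℝ) (hα : ∀ k, α k = (H + 1 : ℝ) / (H + k))
    (αw : ℕ → ℕ → ℝ)
    (hαw : ∀ k t, αw k t = α t * ∏ i ∈ Finset.Icc (t + 1) k, (1 - α i))
    (A : ℕ → ℝ) (hA : ∀ k, A k = ∑ t ∈ Finset.Icc 1 k, αw k t * (α t) ^ 2) :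
    ∀ k ≥ 1, A (k + 1) ≤ A k := by
  have hH1 : (1 : ℝ) ≤ H := by exact_mod_cast hH
  have hden : ∀ k : ℕ, (0 : ℝ) < H + k := by
    intro k
    have : (0 : ℝ) ≤ k := Nat.cast_nonneg k
    linarith
  have hpos : ∀ k : ℕ, 0 < α k := by
    intro k
    rw [hα]
    exact div_pos (by linarith) (hden k)
  have hle1 : ∀ k : ℕ, 1 ≤ k → α k ≤ 1 := by
    intro k hk
    rw [hα]
    rw [div_le_one (hden k)]
    have : (1 : ℝ) ≤ k := by exact_mod_cast hk
    linarith
  have hmono : ∀ k : ℕ, α (k + 1) ≤ α k := by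
    intro k
    rw [hα, hα]
    apply div_le_div_of_nonneg_left (by linarith) (hden k)
    push_cast
    linarith [hden k]
  have hrec : ∀ k : ℕ, A (k + 1) = (1 - α (k + 1)) * A k + α (k + 1) ^ 3 := by
    intro k
    rw [hA, hA]
    rw [Finset.sum_Icc_succ_top (by omega : 1 ≤ k + 1)]
    have h1 : αw (k + 1) (k + 1) = α (k + 1) := by
      rw [hαw, Finset.Icc_eq_empty (by omega), Finset.prod_empty, mul_one]
    have h2 : ∑ t ∈ Finset.Icc 1 k, αw (k + 1) t * α t ^ 2
        = (1 - α (k + 1)) * ∑ t ∈ Finset.Icc 1 k, αw k t * α t ^ 2 := by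
      rw [Finset.mul_sum]
      apply Finset.sum_congr rfl
      intro t ht
      have htk : t ≤ k := (Finset.mem_Icc.mp ht).2
      rw [hαw, hαw, Finset.prod_Icc_succ_top (by omega : t + 1 ≤ k + 1)]
      ring
    rw [h1, h2]
    ring
  have hlb : ∀ k : ℕ, 1 ≤ k → α k ^ 2 ≤ A k := by
    intro k hk
    induction k with
    | zero => omega
    | succ n ih =>
      rcases Nat.lt_or_ge n 1 with h | hn
      · have hn0 : n = 0 := by omega
        subst hn0
        have hα1 : α 1 = 1 := by
          rw [hα]
          push_cast
          field_simp
        have hA0 : A 0 = 0 := by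
          rw [hA]
          simp
        rw [hrec 0, hA0, hα1]
        norm_num
      · have h1 := ih hn
        have h2 := hmono n
        have h3 := hle1 (n + 1) (by omega)
        have h4 := hpos (n + 1)
        have h5 := hpos n
        have hsq : α (n + 1) ^ 2 ≤ A n := by nlinarith
        rw [hrec n]
        nlinarith [mul_nonneg (sub_nonneg.mpr h3) (sub_nonneg.mpr hsq)]
  intro k hk
  have h1 := hlb k hk
  have h2 := hmono k
  have h3 := hle1 (k + 1) (by omega)
  have h4 := hpos (k + 1)
  have h5 := hpos k
  have hsq : α (k + 1) ^ 2 ≤ A k := by nlinarith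
  rw [hrec k]
  nlinarith [mul_nonneg h4.le (sub_nonneg.mpr hsq)]
end

section
/- Let H ≥ 1, α_k = (H+1)/(H+k), α_k^t = α_t ∏_{i=t+1}^k(1-α_i), and A_k = ∑_{t=1}^k α_k^t α_t². Then A_k ≤ (H+1)³/(H² k) for all k ≥ 1. -/
/-!
The weights `α_k^t` (`t ≤ k`) sum to one, so `A_k` is an average of the `α_t²`, which is at least
`α_k²`; the recursion `A_{k+1} = (1 - α_{k+1}) A_k + α_{k+1}³` then shows that `A` is
non-increasing, whence `k A_k ≤ ∑_{t ≤ k} A_t`. Exchanging the order of summation,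
`∑_{t ≤ k} A_t = ∑_j α_j² ∑_{t ≥ j} α_t^j`, where each tail sum of weights is at most `1 + 1/H`
and `∑_j α_j² ≤ (H+1)²/H` by comparison with a telescoping sum.
-/

open Finset

namespace LearningRate

noncomputable def rate (H k : ℕ) : ℝ := (H + 1) / (H + k)

def weight (α : ℕ → ℝ) (k t : ℕ) : ℝ := α t * ∏ i ∈ Icc (t + 1) k, (1 - α i)

def weightedSqSum (α : ℕ → ℝ) (k : ℕ) : ℝ := ∑ t ∈ Icc 1 k, weight α k t * α t ^ 2

section General

variable {α : ℕ → ℝ}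

@[simp]
theorem weight_self (t : ℕ) : weight α t t = α t := by
  simp [weight]

theorem weight_succ {k t : ℕ} (htk : t ≤ k) :
    weight α (k + 1) t = weight α k t * (1 - α (k + 1)) := by
  rw [weight, weight, prod_Icc_succ_top (by omega), mul_assoc]

theorem weight_nonneg (h0 : ∀ i ≥ 1, 0 ≤ α i) (h1 : ∀ i ≥ 1, α i ≤ 1) {t : ℕ} (ht : 1 ≤ t)
    (k : ℕ) : 0 ≤ weight α k t :=
  mul_nonneg (h0 t ht) <| prod_nonneg fun i hi ↦ sub_nonneg.2 <| h1 i (by grind)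

theorem sum_weight_eq_one (hα1 : α 1 = 1) {k : ℕ} (hk : 1 ≤ k) :
    ∑ t ∈ Icc 1 k, weight α k t = 1 := by
  induction k, hk using Nat.le_induction with
  | base => simp [hα1]
  | succ k hk ih =>
    rw [sum_Icc_succ_top (by omega), weight_self,
      sum_congr rfl fun t ht ↦ weight_succ (mem_Icc.1 ht).2, ← sum_mul, ih]
    ring

theorem weightedSqSum_succ (k : ℕ) :
    weightedSqSum α (k + 1) = (1 - α (k + 1)) * weightedSqSum α k + α (k + 1) ^ 3 := by
  rw [weightedSqSum, weightedSqSum, sum_Icc_succ_top (by omega), weight_self, mul_sum]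
  congr 1
  · exact sum_congr rfl fun t ht ↦ by rw [weight_succ (mem_Icc.1 ht).2]; ring
  · ring

theorem sq_le_weightedSqSum (h0 : ∀ i ≥ 1, 0 ≤ α i) (h1 : ∀ i ≥ 1, α i ≤ 1) (hα1 : α 1 = 1)
    (hanti : AntitoneOn α (Set.Ici 1)) {k : ℕ} (hk : 1 ≤ k) : α k ^ 2 ≤ weightedSqSum α k :=
  calc α k ^ 2 = ∑ t ∈ Icc 1 k, weight α k t * α k ^ 2 := by
        rw [← sum_mul, sum_weight_eq_one hα1 hk, one_mul]
    _ ≤ weightedSqSum α k := by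
        refine sum_le_sum fun t ht ↦ ?_
        obtain ⟨ht1, htk⟩ := mem_Icc.1 ht
        gcongr
        · exact weight_nonneg h0 h1 ht1 k
        · exact h0 k (ht1.trans htk)
        · exact hanti ht1 (ht1.trans htk) htk

theorem weightedSqSum_antitoneOn (h0 : ∀ i ≥ 1, 0 ≤ α i) (h1 : ∀ i ≥ 1, α i ≤ 1)
    (hα1 : α 1 = 1) (hanti : AntitoneOn α (Set.Ici 1)) :
    AntitoneOn (weightedSqSum α) {k | 1 ≤ k} := by
  refine antitoneOn_nat_Ici_of_succ_le fun k hk ↦ ?_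
  have hA := sq_le_weightedSqSum h0 h1 hα1 hanti hk
  have hstep : α (k + 1) ≤ α k := hanti hk (by simp) (by omega)
  have hpos := h0 (k + 1) (by omega)
  rw [weightedSqSum_succ]
  nlinarith [pow_le_pow_left₀ hpos hstep 2]

theorem sum_weightedSqSum_eq (k : ℕ) :
    ∑ s ∈ Icc 1 k, weightedSqSum α s = ∑ t ∈ Icc 1 k, α t ^ 2 * ∑ s ∈ Icc t k, weight α s t := by
  simp only [weightedSqSum, mul_sum]
  refine (sum_comm' fun s t ↦ ?_).trans
    (sum_congr rfl fun _ _ ↦ sum_congr rfl fun _ _ ↦ mul_comm _ _)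
  simp only [mem_Icc]
  omega

theorem sum_weightedSqSum_le {k : ℕ} {C D : ℝ} (hC0 : 0 ≤ C)
    (hC : ∀ t ∈ Icc 1 k, ∑ s ∈ Icc t k, weight α s t ≤ C) (hD : ∑ t ∈ Icc 1 k, α t ^ 2 ≤ D) :
    ∑ s ∈ Icc 1 k, weightedSqSum α s ≤ D * C :=
  calc ∑ s ∈ Icc 1 k, weightedSqSum α s
      ≤ ∑ t ∈ Icc 1 k, α t ^ 2 * C := by
        rw [sum_weightedSqSum_eq]
        exact sum_le_sum fun t ht ↦ by gcongr; exact hC t ht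
    _ ≤ D * C := by rw [← sum_mul]; gcongr

end General

section Rate

variable {H : ℕ}

theorem rate_nonneg (k : ℕ) : 0 ≤ rate H k := by
  unfold rate; positivity

theorem rate_le_one {k : ℕ} (hk : 1 ≤ k) : rate H k ≤ 1 := by
  rw [rate, div_le_one (by positivity)]
  gcongr
  exact_mod_cast hk

theorem rate_one : rate H 1 = 1 := by
  rw [rate, Nat.cast_one, div_self (by positivity)]

theorem rate_antitoneOn : AntitoneOn (rate H) (Set.Ici 1) := by
  intro s hs t _ hst
  have : (1 : ℝ) ≤ s := by exact_mod_cast hs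
  unfold rate
  gcongr

theorem one_sub_rate_succ (k : ℕ) : 1 - rate H (k + 1) = k / (H + k + 1) := by
  rw [rate, Nat.cast_add_one]
  field_simp
  ring

-- `(H + K + 1) α_{K+1}^t = K α_K^t`, so the terms `(K / H) α_K^t` telescope.
theorem sum_weight_rate (hH : H ≠ 0) {t K : ℕ} (htK : t ≤ K) :
    ∑ k ∈ Icc t K, weight (rate H) k t = (H + 1) / H - K / H * weight (rate H) K t := by
  induction K, htK using Nat.le_induction with
  | base =>
    rw [Icc_self, sum_singleton, weight_self, rate]
    field_simp
    ring
  | succ K hK ih =>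
    rw [sum_Icc_succ_top (by omega), ih, weight_succ hK, one_sub_rate_succ]
    field_simp
    push_cast
    ring

theorem sum_weight_rate_le (hH : H ≠ 0) {t K : ℕ} (ht : 1 ≤ t) (htK : t ≤ K) :
    ∑ k ∈ Icc t K, weight (rate H) k t ≤ (H + 1) / H := by
  rw [sum_weight_rate hH htK, sub_le_self_iff]
  exact mul_nonneg (by positivity)
    (weight_nonneg (fun i _ ↦ rate_nonneg i) (fun _ ↦ rate_le_one) ht K)

theorem rate_succ_sq_le (hH : H ≠ 0) (k : ℕ) :
    rate H (k + 1) ^ 2 ≤ (H + 1) ^ 2 * (1 / (H + k) - 1 / (H + (k + 1 : ℕ))) := by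
  have : (0 : ℝ) < H + k := by positivity
  rw [rate, div_pow, Nat.cast_add_one, div_sub_div _ _ this.ne' (by positivity), ← mul_div_assoc]
  gcongr <;> nlinarith

theorem sum_rate_sq_le_sub (hH : H ≠ 0) (k : ℕ) :
    ∑ t ∈ Icc 1 k, rate H t ^ 2 ≤ (H + 1) ^ 2 * (1 / H - 1 / (H + k)) := by
  induction k with
  | zero => simp
  | succ k ih =>
    rw [sum_Icc_succ_top (by omega)]
    linarith [rate_succ_sq_le hH k]

theorem sum_rate_sq_le (hH : H ≠ 0) (k : ℕ) : ∑ t ∈ Icc 1 k, rate H t ^ 2 ≤ (H + 1) ^ 2 / H := by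
  calc _ ≤ (H + 1) ^ 2 * (1 / H - 1 / (H + k) : ℝ) := sum_rate_sq_le_sub hH k
    _ ≤ (H + 1) ^ 2 * (1 / H) := by gcongr; exact sub_le_self _ (by positivity)
    _ = (H + 1) ^ 2 / H := mul_one_div _ _

theorem weightedSqSum_rate_le (hH : H ≠ 0) {k : ℕ} (hk : 1 ≤ k) :
    weightedSqSum (rate H) k ≤ (H + 1) ^ 3 / (H ^ 2 * k) := by
  have hanti := weightedSqSum_antitoneOn (fun i _ ↦ rate_nonneg (H := H) i) (fun _ ↦ rate_le_one)
    rate_one rate_antitoneOn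
  have hmean : k * weightedSqSum (rate H) k ≤ ∑ s ∈ Icc 1 k, weightedSqSum (rate H) s := by
    simpa using card_nsmul_le_sum (Icc 1 k) _ _ fun s hs ↦
      hanti (mem_Icc.1 hs).1 hk (mem_Icc.1 hs).2
  have hsum : ∑ s ∈ Icc 1 k, weightedSqSum (rate H) s ≤ (H + 1) ^ 2 / H * ((H + 1) / H) :=
    sum_weightedSqSum_le (by positivity)
      (fun t ht ↦ sum_weight_rate_le hH (mem_Icc.1 ht).1 (mem_Icc.1 ht).2) (sum_rate_sq_le hH k)
  have hk' : (0 : ℝ) < k := by exact_mod_cast hk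
  rw [le_div_iff₀ (by positivity)]
  calc weightedSqSum (rate H) k * (H ^ 2 * k) = (k * weightedSqSum (rate H) k) * (H : ℝ) ^ 2 := by
        ring
    _ ≤ (H + 1) ^ 2 / H * ((H + 1) / H) * (H : ℝ) ^ 2 :=
        mul_le_mul_of_nonneg_right (hmean.trans hsum) (by positivity)
    _ = ((H : ℝ) + 1) ^ 3 := by field_simp

end Rate

end LearningRate

theorem A_k_upper_bound
    (H : ℕ) (hH : 1 ≤ H)
    (α : ℕ → ℝ) (hα : ∀ k, α k = (H + 1 : ℝ) / (H + k))
    (αw : ℕ → ℕ → ℝ)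
    (hαw : ∀ k t, αw k t = α t * ∏ i ∈ Finset.Icc (t + 1) k, (1 - α i))
    (A : ℕ → ℝ) (hA : ∀ k, A k = ∑ t ∈ Finset.Icc 1 k, αw k t * (α t) ^ 2) :
    ∀ k ≥ 1, A k ≤ (H + 1 : ℝ) ^ 3 / ((H : ℝ) ^ 2 * k) := by
  obtain rfl : α = LearningRate.rate H := funext hα
  obtain rfl : αw = LearningRate.weight (LearningRate.rate H) := funext fun k ↦ funext (hαw k)
  obtain rfl : A = LearningRate.weightedSqSum (LearningRate.rate H) := funext hA
  exact fun k hk ↦ LearningRate.weightedSqSum_rate_le (by omega) hk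
end

section
/- Let H ≥ 1, α_k = (H+1)/(H+k), and define x_k = ∑_{t=1}^k α_k^t α_t where α_k^t = α_t ∏_{i=t+1}^k(1-α_i). Then x_k ≤ (H+1)²/(H(H+k)) for all k ≥ 1. -/
open Finset

theorem x_k_upper_bound
    (H : ℕ) (hH : 1 ≤ H)
    (α : ℕ → ℝ) (hα : ∀ k, α k = (H + 1 : ℝ) / (H + k))
    (αw : ℕ → ℕ → ℝ)
    (hαw : ∀ k t, αw k t = α t * ∏ i ∈ Finset.Icc (t + 1) k, (1 - α i))
    (x : ℕ → ℝ) (hx : ∀ k, x k = ∑ t ∈ Finset.Icc 1 k, αw k t * α t) :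
    ∀ k ≥ 1, x k ≤ (H + 1 : ℝ) ^ 2 / ((H : ℝ) * (H + k)) := by
  have hH1 : (1:ℝ) ≤ H := by exact_mod_cast hH
  have hHpos : (0:ℝ) < H := by linarith
  have hrec : ∀ n : ℕ, x (n+1) = (1 - α (n+1)) * x n + (α (n+1))^2 := by
    intro n
    rw [hx, hx, Finset.sum_Icc_succ_top (by omega : 1 ≤ n+1)]
    have h1 : ∀ t ∈ Finset.Icc 1 n, αw (n+1) t * α t = (1 - α (n+1)) * (αw n t * α t) := by
      intro t ht
      simp only [Finset.mem_Icc] at ht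
      rw [hαw, hαw, Finset.prod_Icc_succ_top (by omega : t+1 ≤ n+1)]
      ring
    rw [Finset.sum_congr rfl h1, ← Finset.mul_sum, hαw,
      Finset.Icc_eq_empty (by omega : ¬ (n+1+1 ≤ n+1)), Finset.prod_empty]
    ring
  intro k hk
  induction k with
  | zero => omega
  | succ n ih =>
    rcases Nat.eq_zero_or_pos n with h0 | hpos
    · subst h0
      rw [hrec 0, hx 0, Finset.Icc_eq_empty (by omega : ¬ (1 ≤ 0)), Finset.sum_empty, hα]
      push_cast
      have h1 : (H:ℝ) + 1 > 0 := by linarith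
      rw [div_self (ne_of_gt h1)]
      rw [le_div_iff₀ (by positivity)]
      nlinarith
    · have ihn := ih hpos
      have hnpos : (1:ℝ) ≤ n := by exact_mod_cast hpos
      rw [hrec n, hα]
      push_cast
      set a : ℝ := (H:ℝ) + n with ha
      have hapos : (0:ℝ) < a := by positivity
      have ha1 : (0:ℝ) < a + 1 := by linarith
      have halg : (H:ℝ) + (↑n + 1) = a + 1 := by ring
      rw [halg]
      have hαnn : 0 ≤ 1 - ((H:ℝ)+1)/(a+1) := by
        rw [sub_nonneg, div_le_one ha1]
        linarith
      have step : (1 - ((H:ℝ)+1)/(a+1)) * x n + (((H:ℝ)+1)/(a+1))^2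
          ≤ (1 - ((H:ℝ)+1)/(a+1)) * (((H:ℝ)+1)^2/((H:ℝ)*a)) + (((H:ℝ)+1)/(a+1))^2 := by
        have := mul_le_mul_of_nonneg_left ihn hαnn
        linarith
      refine step.trans ?_
      have haH : (H:ℝ) + 1 ≤ a := by rw [ha]; linarith
      have hdiff : ((H:ℝ)+1)^2/((H:ℝ)*(a+1))
          - ((1 - ((H:ℝ)+1)/(a+1)) * (((H:ℝ)+1)^2/((H:ℝ)*a)) + (((H:ℝ)+1)/(a+1))^2)
          = ((H:ℝ)+1)^2/(a*(a+1)^2) := by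
        field_simp
        ring
      have hpos2 : (0:ℝ) ≤ ((H:ℝ)+1)^2/(a*(a+1)^2) := by positivity
      linarith
end

section
/- Let {β_k}_{k≥1} be a non-increasing sequence of nonnegative reals, H a positive integer, α_k = (H+1)/(H+k), α_k^t = α_t ∏_{i=t+1}^k(1-α_i). Define Δ_h^k for h ∈ {1,...,H+1} by Δ_{H+1}^k = 0 for all k and Δ_h^k = ∑_{t=1}^k α_k^t Δ_{h+1}^t + β_k. Then Δ_h^{k+1} ≤ Δ_h^k for all k ≥ 1 and h ∈ {1,...,H+1}. -/
open Finset

theorem Delta_monotone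
    (H : ℕ) (hH : 1 ≤ H)
    (α : ℕ → ℝ) (hα : ∀ k, α k = (H + 1 : ℝ) / (H + k))
    (αw : ℕ → ℕ → ℝ)
    (hαw : ∀ k t, αw k t = α t * ∏ i ∈ Finset.Icc (t + 1) k, (1 - α i))
    (β : ℕ → ℝ) (hβ0 : ∀ k, 0 ≤ β k) (hβmono : ∀ k, β (k + 1) ≤ β k)
    (Δ : ℕ → ℕ → ℝ)
    (hΔtop : ∀ k, Δ (H + 1) k = 0)
    (hΔ : ∀ h ∈ Finset.Icc 1 H, ∀ k ≥ 1,
      Δ h k = ∑ t ∈ Finset.Icc 1 k, αw k t * Δ (h + 1) t + β k) :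
    ∀ h ∈ Finset.Icc 1 (H + 1), ∀ k ≥ 1, Δ h (k + 1) ≤ Δ h k := by
  have hHpos : (0:ℝ) < (H:ℝ) + 1 := by positivity
  have hα0 : ∀ k, 0 ≤ α k := by
    intro k; rw [hα]; apply div_nonneg <;> positivity
  have hα1 : ∀ k, 1 ≤ k → α k ≤ 1 := by
    intro k hk; rw [hα]
    rw [div_le_one (by
      have : (1:ℝ) ≤ (H:ℝ) := by exact_mod_cast hH
      have : (0:ℝ) ≤ (k:ℝ) := by positivity
      linarith)]
    have : (1:ℝ) ≤ (k:ℝ) := by exact_mod_cast hk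
    linarith
  have hαw0 : ∀ k t, 0 ≤ αw k t := by
    intro k t; rw [hαw]
    apply mul_nonneg (hα0 t)
    apply Finset.prod_nonneg
    intro i hi
    have hi' := (Finset.mem_Icc.1 hi).1
    have : α i ≤ 1 := hα1 i (by omega)
    linarith
  have hrec : ∀ k t, t ≤ k → αw (k + 1) t = (1 - α (k + 1)) * αw k t := by
    intro k t ht
    rw [hαw, hαw, Finset.prod_Icc_succ_top (by omega : t + 1 ≤ k + 1)]
    ring
  have hdiag : ∀ k, αw (k + 1) (k + 1) = α (k + 1) := by
    intro k
    rw [hαw, Finset.Icc_eq_empty (by omega : ¬ (k + 1 + 1 ≤ k + 1))]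
    simp
  have hα1eq : α 1 = 1 := by
    rw [hα]; push_cast; exact div_self (by linarith)
  have hsum : ∀ k, 1 ≤ k → ∑ t ∈ Finset.Icc 1 k, αw k t = 1 := by
    intro k hk
    induction k, hk using Nat.le_induction with
    | base =>
      simp only [Finset.Icc_self, Finset.sum_singleton]
      rw [hαw, Finset.Icc_eq_empty (by omega : ¬ (2 ≤ 1))]
      simp [hα1eq]
    | succ k hk ih =>
      rw [Finset.sum_Icc_succ_top (by omega : 1 ≤ k + 1), hdiag]
      have : ∀ t ∈ Finset.Icc 1 k, αw (k + 1) t = (1 - α (k + 1)) * αw k t := by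
        intro t ht; exact hrec k t (Finset.mem_Icc.1 ht).2
      rw [Finset.sum_congr rfl this, ← Finset.mul_sum, ih]
      ring
  -- key recursion for Δ
  have hkey : ∀ h, 1 ≤ h → h ≤ H → ∀ k, 1 ≤ k →
      Δ h (k + 1) = (1 - α (k + 1)) * (Δ h k - β k)
        + α (k + 1) * Δ (h + 1) (k + 1) + β (k + 1) := by
    intro h h1 h2 k hk
    have hmem : h ∈ Finset.Icc 1 H := Finset.mem_Icc.2 ⟨h1, h2⟩
    have e1 := hΔ h hmem (k + 1) (by omega)
    have e2 := hΔ h hmem k hk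
    rw [Finset.sum_Icc_succ_top (by omega : 1 ≤ k + 1), hdiag] at e1
    have hcg : ∀ t ∈ Finset.Icc 1 k,
        αw (k + 1) t * Δ (h + 1) t = (1 - α (k + 1)) * (αw k t * Δ (h + 1) t) := by
      intro t ht; rw [hrec k t (Finset.mem_Icc.1 ht).2]; ring
    rw [Finset.sum_congr rfl hcg, ← Finset.mul_sum] at e1
    have : ∑ t ∈ Finset.Icc 1 k, αw k t * Δ (h + 1) t = Δ h k - β k := by
      linarith [e2]
    rw [this] at e1
    linarith [e1]
  -- main claim by downward induction
  have claim : ∀ d h, 1 ≤ h → h + d = H + 1 → ∀ k, 1 ≤ k → Δ h (k + 1) ≤ Δ h k := by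
    intro d
    induction d with
    | zero =>
      intro h h1 he k hk
      have : h = H + 1 := by omega
      subst this
      rw [hΔtop, hΔtop]
    | succ d ih =>
      intro h h1 he k hk
      have hhH : h ≤ H := by omega
      have ih' : ∀ k, 1 ≤ k → Δ (h + 1) (k + 1) ≤ Δ (h + 1) k :=
        ih (h + 1) (by omega) (by omega)
      -- chain monotonicity for level h+1
      have chain : ∀ m t, 1 ≤ t → Δ (h + 1) (t + m) ≤ Δ (h + 1) t := by
        intro m
        induction m with
        | zero => intro t ht; simp
        | succ m ihm =>
          intro t ht
          have := ih' (t + m) (by omega)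
          have := ihm t ht
          calc Δ (h + 1) (t + (m + 1)) = Δ (h + 1) ((t + m) + 1) := by ring_nf
            _ ≤ Δ (h + 1) (t + m) := ih' (t + m) (by omega)
            _ ≤ Δ (h + 1) t := ihm t ht
      have hmem : h ∈ Finset.Icc 1 H := Finset.mem_Icc.2 ⟨h1, hhH⟩
      have e2 := hΔ h hmem k hk
      have hlow : Δ (h + 1) (k + 1) ≤ Δ h k - β k := by
        have hs : ∑ t ∈ Finset.Icc 1 k, αw k t * Δ (h + 1) (k + 1)
            = Δ (h + 1) (k + 1) := by
          rw [← Finset.sum_mul, hsum k hk, one_mul]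
        have hle : ∑ t ∈ Finset.Icc 1 k, αw k t * Δ (h + 1) (k + 1)
            ≤ ∑ t ∈ Finset.Icc 1 k, αw k t * Δ (h + 1) t := by
          apply Finset.sum_le_sum
          intro t ht
          have ht1 := (Finset.mem_Icc.1 ht).1
          have ht2 := (Finset.mem_Icc.1 ht).2
          apply mul_le_mul_of_nonneg_left _ (hαw0 k t)
          have : Δ (h + 1) (t + (k + 1 - t)) ≤ Δ (h + 1) t := chain (k + 1 - t) t ht1
          have heq : t + (k + 1 - t) = k + 1 := by omega
          rwa [heq] at this
        linarith [e2, hs, hle]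
      have hk1 := hkey h h1 hhH k hk
      have ha0 := hα0 (k + 1)
      have hb := hβmono k
      nlinarith [mul_nonneg ha0 (sub_nonneg.2 hlow)]
  intro h hmem k hk
  have hm := Finset.mem_Icc.1 hmem
  exact claim (H + 1 - h) h hm.1 (by omega) k hk
end

section
/- Under the setting of the previous recursion (Δ_{H+1}^k = 0, Δ_h^k = ∑_{t=1}^k α_k^t Δ_{h+1}^t + β_k with α_k = (H+1)/(H+k) and β_k non-increasing and nonnegative), for every h and k: (1/k)∑_{t=1}^k Δ_h^t ≤ H(e-1) · (1/k)∑_{t=1}^k β_t. In particular Δ_h^k ≤ (2H/k) ∑_{t=1}^k β_t. -/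
open Finset

/-!
Unrolling the recursion one level at a time, summing over `k` and exchanging the order of
summation gives `∑ₜ Δ_h^t ≤ (1 + 1/H) ∑ₜ Δ_{h+1}^t + ∑ₜ β_t`, because every column sum
`∑_{j ≥ t} α_j^t` of the learning-rate weights is at most `1 + 1/H` (it telescopes).
Over the at most `H` levels this yields the geometric factor
`∑_{i < H} (1 + 1/H)^i = H ((1 + 1/H)^H - 1) ≤ H (e - 1)`.
For the pointwise bound, each level is non-increasing in `k`: a weighted average of the
larger earlier values dominates the newest one, and `β` is non-increasing.
-/

def lrWeight (α : ℕ → ℝ) (k t : ℕ) : ℝ := α t * ∏ i ∈ Icc (t + 1) k, (1 - α i)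

def lrUpdate (α β D : ℕ → ℝ) (k : ℕ) : ℝ := ∑ t ∈ Icc 1 k, lrWeight α k t * D t + β k

noncomputable def qRate (H : ℝ) (k : ℕ) : ℝ := (H + 1) / (H + k)

section lrWeight

variable {α : ℕ → ℝ}

lemma lrWeight_self (α : ℕ → ℝ) (k : ℕ) : lrWeight α k k = α k := by
  simp [lrWeight]

lemma lrWeight_succ {k t : ℕ} (htk : t ≤ k) :
    lrWeight α (k + 1) t = lrWeight α k t * (1 - α (k + 1)) := by
  rw [lrWeight, lrWeight, prod_Icc_succ_top (by omega), mul_assoc]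

lemma lrWeight_nonneg (h0 : ∀ i, 0 ≤ α i) (h1 : ∀ i, 1 ≤ i → α i ≤ 1) (k t : ℕ) :
    0 ≤ lrWeight α k t :=
  mul_nonneg (h0 t) <| prod_nonneg fun i hi =>
    sub_nonneg.2 <| h1 i (Nat.one_le_of_lt (mem_Icc.1 hi).1)

lemma sum_lrWeight (α : ℕ → ℝ) (k : ℕ) :
    ∑ t ∈ Icc 1 k, lrWeight α k t = 1 - ∏ i ∈ Icc 1 k, (1 - α i) := by
  induction k with
  | zero => simp
  | succ k ih =>
    rw [sum_Icc_succ_top (by omega), prod_Icc_succ_top (by omega), lrWeight_self,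
      sum_congr rfl fun t ht => lrWeight_succ (mem_Icc.1 ht).2, ← sum_mul, ih]
    ring

lemma sum_lrWeight_eq_one (hα1 : α 1 = 1) {k : ℕ} (hk : 1 ≤ k) :
    ∑ t ∈ Icc 1 k, lrWeight α k t = 1 := by
  rw [sum_lrWeight, prod_eq_zero (mem_Icc.2 ⟨le_rfl, hk⟩) (by rw [hα1, sub_self]), sub_zero]

end lrWeight

section lrUpdate

variable {α β D : ℕ → ℝ}

lemma lrUpdate_nonneg (hw : ∀ k t, 0 ≤ lrWeight α k t) (hD : ∀ t ≥ 1, 0 ≤ D t) {k : ℕ}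
    (hβ : 0 ≤ β k) : 0 ≤ lrUpdate α β D k :=
  add_nonneg (sum_nonneg fun t ht => mul_nonneg (hw k t) (hD t (mem_Icc.1 ht).1)) hβ

lemma lrUpdate_succ_le (hw : ∀ k t, 0 ≤ lrWeight α k t) {k : ℕ} (hk : 1 ≤ k)
    (hα0 : 0 ≤ α (k + 1)) (hα1 : α 1 = 1) (hD : ∀ t ∈ Icc 1 k, D (k + 1) ≤ D t)
    (hβ : β (k + 1) ≤ β k) : lrUpdate α β D (k + 1) ≤ lrUpdate α β D k := by
  set S := ∑ t ∈ Icc 1 k, lrWeight α k t * D t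
  have hsplit : lrUpdate α β D (k + 1) =
      α (k + 1) * D (k + 1) + (1 - α (k + 1)) * S + β (k + 1) := by
    have hcol : ∀ t ∈ Icc 1 k, lrWeight α (k + 1) t * D t =
        (1 - α (k + 1)) * (lrWeight α k t * D t) := fun t ht => by
      rw [lrWeight_succ (mem_Icc.1 ht).2]; ring
    rw [lrUpdate, sum_Icc_succ_top (by omega), lrWeight_self, sum_congr rfl hcol, ← mul_sum]
    ring
  have hS : D (k + 1) ≤ S := calc
    D (k + 1) = ∑ t ∈ Icc 1 k, lrWeight α k t * D (k + 1) := by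
      rw [← sum_mul, sum_lrWeight_eq_one hα1 hk, one_mul]
    _ ≤ S := sum_le_sum fun t ht => mul_le_mul_of_nonneg_left (hD t ht) (hw k t)
  rw [hsplit, lrUpdate]
  nlinarith [mul_le_mul_of_nonneg_left hS hα0]

lemma lrUpdate_antitoneOn (hw : ∀ k t, 0 ≤ lrWeight α k t) (hα0 : ∀ i, 0 ≤ α i)
    (hα1 : α 1 = 1) (hβ : Antitone β) (hD : AntitoneOn D (Set.Ici 1)) :
    AntitoneOn (lrUpdate α β D) (Set.Ici 1) :=
  antitoneOn_nat_Ici_of_succ_le fun k hk => lrUpdate_succ_le hw hk (hα0 _) hα1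
    (fun t ht => hD (mem_Icc.1 ht).1 (Set.mem_Ici.2 (by omega)) ((mem_Icc.1 ht).2.trans k.le_succ))
    (hβ k.le_succ)

lemma sum_lrUpdate_le (hD : ∀ t ≥ 1, 0 ≤ D t) {c : ℝ}
    {k : ℕ} (hc : ∀ t ∈ Icc 1 k, ∑ j ∈ Icc t k, lrWeight α j t ≤ c) :
    ∑ j ∈ Icc 1 k, lrUpdate α β D j ≤ c * ∑ t ∈ Icc 1 k, D t + ∑ t ∈ Icc 1 k, β t := by
  have hswap : ∑ j ∈ Icc 1 k, ∑ t ∈ Icc 1 j, lrWeight α j t * D t =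
      ∑ t ∈ Icc 1 k, (∑ j ∈ Icc t k, lrWeight α j t) * D t := by
    simp_rw [sum_mul]
    exact sum_comm' fun j t => by simp only [mem_Icc]; omega
  simp only [lrUpdate, sum_add_distrib, hswap, mul_sum]
  refine add_le_add_left (sum_le_sum fun t ht => ?_) _
  exact mul_le_mul_of_nonneg_right (hc t ht) (hD t (mem_Icc.1 ht).1)

end lrUpdate

section qRate

variable {H : ℝ}

lemma qRate_nonneg (hH : 0 ≤ H) (k : ℕ) : 0 ≤ qRate H k := by
  unfold qRate; positivity

lemma qRate_le_one (hH : 0 ≤ H) {k : ℕ} (hk : 1 ≤ k) : qRate H k ≤ 1 :=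
  div_le_one_of_le₀ (by gcongr; exact_mod_cast hk) (by positivity)

lemma qRate_one (hH : 0 ≤ H) : qRate H 1 = 1 := by
  rw [qRate, Nat.cast_one, div_self (by positivity)]

lemma lrWeight_qRate_nonneg (hH : 0 ≤ H) (k t : ℕ) : 0 ≤ lrWeight (qRate H) k t :=
  lrWeight_nonneg (qRate_nonneg hH) (fun _ => qRate_le_one hH) k t

lemma lrWeight_qRate (hH : 0 ≤ H) {t k : ℕ} (ht : 1 ≤ t) (htk : t ≤ k) :
    lrWeight (qRate H) k t = (H + 1) / k * ∏ j ∈ Icc t k, (j / (H + j) : ℝ) := by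
  induction k, htk using Nat.le_induction with
  | base =>
    have : (t : ℝ) ≠ 0 := by positivity
    rw [lrWeight_self, Icc_self, prod_singleton, qRate]
    field_simp
  | succ k hk ih =>
    have : (k : ℝ) ≠ 0 := by have : 1 ≤ k := ht.trans hk; positivity
    rw [lrWeight_succ hk, ih, prod_Icc_succ_top (by omega), qRate]
    push_cast
    field_simp
    ring

lemma sum_lrWeight_qRate (hH : 0 < H) {t k : ℕ} (ht : 1 ≤ t) (htk : t ≤ k) :
    ∑ j ∈ Icc t k, lrWeight (qRate H) j t =
      (1 + H⁻¹) * (1 - ∏ j ∈ Icc t k, (j / (H + j) : ℝ)) := by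
  induction k, htk using Nat.le_induction with
  | base =>
    rw [Icc_self, sum_singleton, prod_singleton, lrWeight_self, qRate]
    field_simp
    ring
  | succ k hk ih =>
    rw [sum_Icc_succ_top (by omega), ih, lrWeight_qRate hH.le ht (by omega),
      prod_Icc_succ_top (by omega)]
    push_cast
    field_simp
    ring

lemma sum_lrWeight_qRate_le (hH : 0 < H) {t : ℕ} (ht : 1 ≤ t) (k : ℕ) :
    ∑ j ∈ Icc t k, lrWeight (qRate H) j t ≤ 1 + H⁻¹ := by
  rcases lt_or_ge k t with hkt | htk
  · rw [Icc_eq_empty_of_lt hkt, sum_empty]; positivity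
  rw [sum_lrWeight_qRate hH ht htk]
  have : 0 ≤ ∏ j ∈ Icc t k, (j / (H + j) : ℝ) := prod_nonneg fun j _ => by positivity
  nlinarith [inv_pos.2 hH]

end qRate

lemma geom_sum_one_add_inv_le {H d : ℕ} (hd : d ≤ H) :
    ∑ i ∈ range d, (1 + (H : ℝ)⁻¹) ^ i ≤ H * (Real.exp 1 - 1) := by
  rcases Nat.eq_zero_or_pos H with rfl | hH
  · simp [Nat.le_zero.1 hd]
  have hH' : (H : ℝ)⁻¹ ≠ 0 := by positivity
  rw [geom_sum_eq (by simpa using hH'), add_sub_cancel_left, div_inv_eq_mul, mul_comm]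
  gcongr
  calc (1 + (H : ℝ)⁻¹) ^ d ≤ (1 + (H : ℝ)⁻¹) ^ H :=
        pow_le_pow_right₀ (by simp) hd
    _ ≤ Real.exp 1 := Real.one_add_inv_pow_le_exp

lemma Nat.decreasing_induction_Icc {m n : ℕ} {P : ℕ → Prop}
    (step : ∀ k ∈ Icc m n, P (k + 1) → P k) (top : P (n + 1)) : ∀ k ∈ Icc m (n + 1), P k := by
  intro k hk
  obtain ⟨hmk, hkn⟩ := mem_Icc.1 hk
  clear hk
  induction hkn using Nat.decreasingInduction with
  | self => exact top
  | of_succ j hj ih => exact step j (mem_Icc.2 ⟨hmk, by omega⟩) (ih (by omega))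

section Levels

variable {H : ℕ} {α β : ℕ → ℝ} {Δ : ℕ → ℕ → ℝ}

lemma levels_nonneg (hΔtop : ∀ k, Δ (H + 1) k = 0)
    (hΔ : ∀ h ∈ Icc 1 H, ∀ k ≥ 1, Δ h k = lrUpdate α β (Δ (h + 1)) k)
    (hw : ∀ k t, 0 ≤ lrWeight α k t) (hβ : ∀ k, 0 ≤ β k) :
    ∀ h ∈ Icc 1 (H + 1), ∀ k ≥ 1, 0 ≤ Δ h k :=
  Nat.decreasing_induction_Icc
    (fun h hh ih k hk => (hΔ h hh k hk).symm ▸ lrUpdate_nonneg hw ih (hβ k))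
    (fun k _ => (hΔtop k).ge)

lemma levels_antitoneOn (hΔtop : ∀ k, Δ (H + 1) k = 0)
    (hΔ : ∀ h ∈ Icc 1 H, ∀ k ≥ 1, Δ h k = lrUpdate α β (Δ (h + 1)) k)
    (hw : ∀ k t, 0 ≤ lrWeight α k t) (hα0 : ∀ i, 0 ≤ α i) (hα1 : α 1 = 1)
    (hβ : Antitone β) : ∀ h ∈ Icc 1 (H + 1), AntitoneOn (Δ h) (Set.Ici 1) :=
  Nat.decreasing_induction_Icc
    (fun h hh ih => (lrUpdate_antitoneOn hw hα0 hα1 hβ ih).congr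
      fun k hk => (hΔ h hh k hk).symm)
    (fun a _ b _ _ => by rw [hΔtop, hΔtop])

lemma sum_levels_le (hΔtop : ∀ k, Δ (H + 1) k = 0)
    (hΔ : ∀ h ∈ Icc 1 H, ∀ k ≥ 1, Δ h k = lrUpdate α β (Δ (h + 1)) k)
    (hw : ∀ k t, 0 ≤ lrWeight α k t) (hβ : ∀ k, 0 ≤ β k) {c : ℝ} (hc0 : 0 ≤ c)
    (hc : ∀ t ≥ 1, ∀ k, ∑ j ∈ Icc t k, lrWeight α j t ≤ c) :
    ∀ h ∈ Icc 1 (H + 1), ∀ k,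
      ∑ t ∈ Icc 1 k, Δ h t ≤ (∑ i ∈ range (H + 1 - h), c ^ i) * ∑ t ∈ Icc 1 k, β t := by
  refine Nat.decreasing_induction_Icc (fun h hh ih k => ?_) (fun k => by simp [hΔtop])
  have hnext := levels_nonneg hΔtop hΔ hw hβ (h + 1) (by simp only [mem_Icc] at hh ⊢; omega)
  rw [sum_congr rfl fun t ht => hΔ h hh t (mem_Icc.1 ht).1,
    show H + 1 - h = H + 1 - (h + 1) + 1 by simp only [mem_Icc] at hh; omega, geom_sum_succ]
  calc ∑ t ∈ Icc 1 k, lrUpdate α β (Δ (h + 1)) t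
      ≤ c * ∑ t ∈ Icc 1 k, Δ (h + 1) t + ∑ t ∈ Icc 1 k, β t :=
        sum_lrUpdate_le hnext fun t ht => hc t (mem_Icc.1 ht).1 k
    _ ≤ _ := by nlinarith [mul_le_mul_of_nonneg_left (ih k) hc0]

end Levels

theorem Delta_average_bound
    (H : ℕ) (hH : 1 ≤ H)
    (α : ℕ → ℝ) (hα : ∀ k, α k = (H + 1 : ℝ) / (H + k))
    (αw : ℕ → ℕ → ℝ)
    (hαw : ∀ k t, αw k t = α t * ∏ i ∈ Finset.Icc (t + 1) k, (1 - α i))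
    (β : ℕ → ℝ) (hβ0 : ∀ k, 0 ≤ β k) (hβmono : ∀ k, β (k + 1) ≤ β k)
    (Δ : ℕ → ℕ → ℝ)
    (hΔtop : ∀ k, Δ (H + 1) k = 0)
    (hΔ : ∀ h ∈ Finset.Icc 1 H, ∀ k ≥ 1,
      Δ h k = ∑ t ∈ Finset.Icc 1 k, αw k t * Δ (h + 1) t + β k) :
    ∀ h ∈ Finset.Icc 1 (H + 1), ∀ k ≥ 1,
      ((1 : ℝ) / k) * ∑ t ∈ Finset.Icc 1 k, Δ h t ≤
        (H : ℝ) * (Real.exp 1 - 1) * (((1 : ℝ) / k) * ∑ t ∈ Finset.Icc 1 k, β t) ∧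
      Δ h k ≤ (2 * (H : ℝ) / k) * ∑ t ∈ Finset.Icc 1 k, β t := by
  obtain rfl : α = qRate H := funext hα
  obtain rfl : αw = lrWeight (qRate H) := funext₂ hαw
  have hHpos : (0 : ℝ) < H := by exact_mod_cast hH
  have hw := lrWeight_qRate_nonneg hHpos.le
  intro h hh k hk
  have hB : 0 ≤ ∑ t ∈ Icc 1 k, β t := sum_nonneg fun t _ => hβ0 t
  have hsum : ∑ t ∈ Icc 1 k, Δ h t ≤ H * (Real.exp 1 - 1) * ∑ t ∈ Icc 1 k, β t :=
    (sum_levels_le hΔtop hΔ hw hβ0 (by positivity)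
      (fun t ht k => sum_lrWeight_qRate_le hHpos ht k) h hh k).trans <|
    mul_le_mul_of_nonneg_right
      (geom_sum_one_add_inv_le (by simp only [mem_Icc] at hh; omega)) hB
  have hanti := levels_antitoneOn hΔtop hΔ hw (qRate_nonneg hHpos.le) (qRate_one hHpos.le)
    (antitone_nat_of_succ_le hβmono) h hh
  have hlast : k * Δ h k ≤ ∑ t ∈ Icc 1 k, Δ h t := by
    simpa using card_nsmul_le_sum (Icc 1 k) (Δ h) (Δ h k) fun t ht =>
      hanti (mem_Icc.1 ht).1 (Set.mem_Ici.2 hk) (mem_Icc.1 ht).2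
  have he : Real.exp 1 - 1 ≤ 2 := by linarith [Real.exp_one_lt_d9]
  refine ⟨?_, ?_⟩
  · rw [mul_left_comm]
    exact mul_le_mul_of_nonneg_left hsum (by positivity)
  · rw [div_mul_eq_mul_div, le_div_iff₀ (by positivity), mul_comm]
    nlinarith [mul_le_mul_of_nonneg_left he hHpos.le]
end

section
/- Projected gradient descent with fixed step size η on a convex compact set X ⊆ ℝⁿ of diameter at most R, with updates x_{t+1} = P_X(x_t - η g_t) where ‖g_t‖₂ ≤ G for all t, satisfies the weighted regret bound: for any z ∈ X and any probability weights w ∈ Δ_T with w_{t+1} ≥ w_t for all t, ∑_{t=1}^T w_t ⟨x_t - z, g_t⟩ ≤ w_T R²/(2η) + η G²/2. -/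
/-!
Write `a t = ‖x t - z‖²`. Since `z ∈ X` and `x (t+1)` is the point of `X` nearest to
`x t - η g t`, the projection does not increase the distance to `z`; expanding
`‖x t - z - η g t‖²` then gives the one-step bound
`⟪x t - z, g t⟫ ≤ (a t - a (t+1)) / (2η) + η ‖g t‖² / 2`.
Weighting by `w t` and summing, the gradient terms add up to at most `η G² / 2` because
`∑ w t = 1`, while summation by parts bounds `∑ w t (a t - a (t+1))` by `w T R²`, using
`0 ≤ a t ≤ R²` and that the weights are nonnegative and nondecreasing.
-/

open Finset

section NearestPoint

variable {E : Type*} [NormedAddCommGroup E] [InnerProductSpace ℝ E] {X : Set E} {p u z : E}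

theorem Convex.inner_sub_le_zero_of_forall_norm_sub_le (hX : Convex ℝ X) (hp : p ∈ X)
    (hmin : ∀ y ∈ X, ‖p - u‖ ≤ ‖y - u‖) (hz : z ∈ X) : inner ℝ (u - p) (z - p) ≤ 0 := by
  have : Nonempty X := ⟨⟨p, hp⟩⟩
  refine (norm_eq_iInf_iff_real_inner_le_zero hX hp).mp (le_antisymm ?_ ?_) z hz
  · exact le_ciInf fun y => by simpa only [norm_sub_rev u] using hmin y y.2
  · exact ciInf_le ⟨0, Set.forall_mem_range.mpr fun y => norm_nonneg _⟩ (⟨p, hp⟩ : X)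

theorem Convex.norm_sub_le_of_forall_norm_sub_le (hX : Convex ℝ X) (hp : p ∈ X)
    (hmin : ∀ y ∈ X, ‖p - u‖ ≤ ‖y - u‖) (hz : z ∈ X) : ‖p - z‖ ≤ ‖u - z‖ := by
  have hinner := hX.inner_sub_le_zero_of_forall_norm_sub_le hp hmin hz
  have hexpand : ‖u - z‖ ^ 2 = ‖u - p‖ ^ 2 - 2 * inner ℝ (u - p) (z - p) + ‖p - z‖ ^ 2 := by
    rw [show u - z = (u - p) - (z - p) by abel, norm_sub_sq_real, norm_sub_rev z p]
  refine pow_le_pow_iff_left₀ (norm_nonneg _) (norm_nonneg _) two_ne_zero |>.mp ?_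
  nlinarith [sq_nonneg ‖u - p‖]

theorem Convex.inner_sub_le_of_projected_step (hX : Convex ℝ X) {x g : E} {η : ℝ} (hη : 0 < η)
    (hp : p ∈ X) (hmin : ∀ y ∈ X, ‖p - (x - η • g)‖ ≤ ‖y - (x - η • g)‖) (hz : z ∈ X) :
    inner ℝ (x - z) g ≤ (‖x - z‖ ^ 2 - ‖p - z‖ ^ 2) / (2 * η) + η / 2 * ‖g‖ ^ 2 := by
  have hcontr : ‖p - z‖ ^ 2 ≤ ‖(x - z) - η • g‖ ^ 2 := by
    rw [show (x - z) - η • g = (x - η • g) - z by abel]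
    exact pow_le_pow_left₀ (norm_nonneg _) (hX.norm_sub_le_of_forall_norm_sub_le hp hmin hz) 2
  have hexpand : ‖(x - z) - η • g‖ ^ 2 =
      ‖x - z‖ ^ 2 - 2 * η * inner ℝ (x - z) g + η ^ 2 * ‖g‖ ^ 2 := by
    rw [norm_sub_sq_real, real_inner_smul_right, norm_smul, Real.norm_of_nonneg hη.le]
    ring
  rw [div_add' _ _ _ (by positivity), le_div_iff₀ (by positivity)]
  nlinarith

end NearestPoint

theorem sum_Icc_mul_sub_succ_le {w a : ℕ → ℝ} {D : ℝ} {T : ℕ} (hT : 1 ≤ T)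
    (hw0 : ∀ t ∈ Icc 1 T, 0 ≤ w t) (hwmono : ∀ t ∈ Icc 1 (T - 1), w t ≤ w (t + 1))
    (ha0 : ∀ t, 0 ≤ a t) (haD : ∀ t, a t ≤ D) :
    ∑ t ∈ Icc 1 T, w t * (a t - a (t + 1)) ≤ w T * D := by
  have hpartial : ∀ S, 1 ≤ S → S ≤ T →
      ∑ t ∈ Icc 1 S, w t * (a t - a (t + 1)) + w S * a (S + 1) ≤ w S * D := by
    intro S hS
    induction S, hS using Nat.le_induction with
    | base =>
      intro _
      simp only [Icc_self, sum_singleton]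
      nlinarith [hw0 1 (by simp [hT]), haD 1]
    | succ S hS ih =>
      intro hST
      have hmono : w S ≤ w (S + 1) := hwmono S (by simp only [mem_Icc]; omega)
      rw [sum_Icc_succ_top (by omega)]
      nlinarith [ih (by omega), haD (S + 1)]
  nlinarith [hpartial T hT le_rfl, hw0 T (by simp [hT]), ha0 (T + 1)]

theorem projected_gd_weighted_regret_general
    (n : ℕ) (X : Set (EuclideanSpace ℝ (Fin n)))
    (hXconv : Convex ℝ X)
    (R G η : ℝ) (hη : 0 < η)
    (hR : ∀ x ∈ X, ∀ y ∈ X, ‖x - y‖ ≤ R)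
    (T : ℕ) (hT : 1 ≤ T)
    (x g : ℕ → EuclideanSpace ℝ (Fin n))
    (hG : ∀ t ∈ Finset.Icc 1 T, ‖g t‖ ≤ G)
    (hxX : ∀ t, x t ∈ X)
    (hproj : ∀ t, ∀ y ∈ X, ‖x (t + 1) - (x t - η • g t)‖ ≤ ‖y - (x t - η • g t)‖)
    (w : ℕ → ℝ) (hw0 : ∀ t ∈ Finset.Icc 1 T, 0 ≤ w t)
    (hwsum : ∑ t ∈ Finset.Icc 1 T, w t = 1)
    (hwmono : ∀ t ∈ Finset.Icc 1 (T - 1), w t ≤ w (t + 1)) :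
    ∀ z ∈ X,
      ∑ t ∈ Finset.Icc 1 T, w t * inner ℝ (x t - z) (g t) ≤
        w T * R ^ 2 / (2 * η) + η * G ^ 2 / 2 := by
  intro z hz
  have hstep (t : ℕ) (ht : t ∈ Icc 1 T) : w t * inner ℝ (x t - z) (g t) ≤
      w t * (‖x t - z‖ ^ 2 - ‖x (t + 1) - z‖ ^ 2) / (2 * η) + η / 2 * G ^ 2 * w t := by
    have hg : ‖g t‖ ^ 2 ≤ G ^ 2 := pow_le_pow_left₀ (norm_nonneg _) (hG t ht) 2
    have := mul_le_mul_of_nonneg_left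
      (hXconv.inner_sub_le_of_projected_step hη (hxX (t + 1)) (hproj t) hz) (hw0 t ht)
    rw [mul_add, ← mul_div_assoc] at this
    have : w t * (η / 2 * ‖g t‖ ^ 2) ≤ η / 2 * G ^ 2 * w t := by
      rw [mul_comm]; gcongr; exact hw0 t ht
    linarith
  have htelescope : ∑ t ∈ Icc 1 T, w t * (‖x t - z‖ ^ 2 - ‖x (t + 1) - z‖ ^ 2) ≤ w T * R ^ 2 :=
    sum_Icc_mul_sub_succ_le hT hw0 hwmono (fun t => sq_nonneg _)
      (fun t => pow_le_pow_left₀ (norm_nonneg _) (hR _ (hxX t) z hz) 2)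
  calc ∑ t ∈ Icc 1 T, w t * inner ℝ (x t - z) (g t)
      ≤ ∑ t ∈ Icc 1 T, (w t * (‖x t - z‖ ^ 2 - ‖x (t + 1) - z‖ ^ 2) / (2 * η)
          + η / 2 * G ^ 2 * w t) := sum_le_sum hstep
    _ = (∑ t ∈ Icc 1 T, w t * (‖x t - z‖ ^ 2 - ‖x (t + 1) - z‖ ^ 2)) / (2 * η)
          + η / 2 * G ^ 2 * ∑ t ∈ Icc 1 T, w t := by
      rw [sum_add_distrib, sum_div, mul_sum]
    _ ≤ w T * R ^ 2 / (2 * η) + η * G ^ 2 / 2 := by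
      rw [hwsum]
      have := div_le_div_of_nonneg_right htelescope (by positivity : (0 : ℝ) ≤ 2 * η)
      linarith

theorem projected_gd_weighted_regret
    (n : ℕ) (X : Set (EuclideanSpace ℝ (Fin n)))
    (hXconv : Convex ℝ X) (hXcomp : IsCompact X) (hXne : X.Nonempty)
    (R G η : ℝ) (hη : 0 < η)
    (hR : ∀ x ∈ X, ∀ y ∈ X, ‖x - y‖ ≤ R)
    (T : ℕ) (hT : 1 ≤ T)
    (x g : ℕ → EuclideanSpace ℝ (Fin n))
    (hG : ∀ t ∈ Finset.Icc 1 T, ‖g t‖ ≤ G)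
    (hxX : ∀ t, x t ∈ X)
    (hproj : ∀ t, ∀ y ∈ X, ‖x (t + 1) - (x t - η • g t)‖ ≤ ‖y - (x t - η • g t)‖)
    (w : ℕ → ℝ) (hw0 : ∀ t ∈ Finset.Icc 1 T, 0 ≤ w t)
    (hwsum : ∑ t ∈ Finset.Icc 1 T, w t = 1)
    (hwmono : ∀ t ∈ Finset.Icc 1 (T - 1), w t ≤ w (t + 1)) :
    ∀ z ∈ X,
      ∑ t ∈ Finset.Icc 1 T, w t * inner ℝ (x t - z) (g t) ≤
        w T * R ^ 2 / (2 * η) + η * G ^ 2 / 2 :=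
  projected_gd_weighted_regret_general n X hXconv R G η hη hR T hT x g hG hxX hproj w hw0 hwsum
    hwmono
end

section
/- Under the setup of optimistic FTRL on the simplex with R_t = R/η_t where R is 1-strongly convex w.r.t. ‖·‖₁, nonnegative, and η_t ≥ η_{t+1} > 0, the iterates x_t = argmin_{x∈Δ_d} ⟨x, ∑_{s<t} g_s + M_t⟩ + R_t(x) satisfy, for every T and x ∈ Δ_d: ∑_{t=1}^T ⟨x_t - x, g_t⟩ ≤ R(x)/η_{T+1} + ∑_{t=1}^T η_t ‖g_t - M_t‖_∞² − ∑_{t=1}^{T-1} (1/(8η_t)) ‖x_t - x_{t+1}‖₁². -/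
open Finset

noncomputable def l1norm {n : ℕ} (v : Fin n → ℝ) : ℝ := ∑ i, |v i|

noncomputable def ip {d : ℕ} (u v : Fin d → ℝ) : ℝ := ∑ i, u i * v i

/-- Bregman divergence of `R` with gradient map `gradR`. -/
noncomputable def breg {d : ℕ} (R : (Fin d → ℝ) → ℝ) (gradR : (Fin d → ℝ) → (Fin d → ℝ))
    (a b : Fin d → ℝ) : ℝ := R a - R b - ip (gradR b) (a - b)

lemma oftrl_l1norm_nonneg {d : ℕ} (v : Fin d → ℝ) : 0 ≤ l1norm v :=
  Finset.sum_nonneg fun _ _ => abs_nonneg _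

lemma oftrl_l1norm_sub_symm {d : ℕ} (a b : Fin d → ℝ) : l1norm (a - b) = l1norm (b - a) := by
  unfold l1norm
  exact Finset.sum_congr rfl fun i _ => by simp [abs_sub_comm]

lemma oftrl_l1norm_tri {d : ℕ} (a b c : Fin d → ℝ) :
    l1norm (a - c) ≤ l1norm (a - b) + l1norm (b - c) := by
  unfold l1norm
  rw [← Finset.sum_add_distrib]
  refine Finset.sum_le_sum fun i _ => ?_
  have h : (a - c) i = (a - b) i + (b - c) i := by
    simp only [Pi.sub_apply]; ring
  rw [h]; exact abs_add_le _ _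

lemma oftrl_ip_holder {d : ℕ} (hd : 0 < d) (u v : Fin d → ℝ) :
    ip u v ≤ l1norm u * (⨆ i, |v i|) := by
  have hne : Nonempty (Fin d) := ⟨⟨0, hd⟩⟩
  have hb : BddAbove (Set.range fun i => |v i|) := (Set.finite_range _).bddAbove
  calc ip u v ≤ ∑ i, |u i| * |v i| := by
        refine Finset.sum_le_sum fun i _ => ?_
        calc u i * v i ≤ |u i * v i| := le_abs_self _
          _ = |u i| * |v i| := abs_mul _ _
    _ ≤ ∑ i, |u i| * (⨆ j, |v j|) := by
        refine Finset.sum_le_sum fun i _ => ?_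
        exact mul_le_mul_of_nonneg_left (le_ciSup hb i) (abs_nonneg _)
    _ = l1norm u * (⨆ j, |v j|) := by
        unfold l1norm; rw [Finset.sum_mul]

lemma oftrl_sup_abs_nonneg {d : ℕ} (hd : 0 < d) (v : Fin d → ℝ) : 0 ≤ ⨆ i, |v i| := by
  have hb : BddAbove (Set.range fun i => |v i|) := (Set.finite_range _).bddAbove
  exact le_trans (abs_nonneg (v ⟨0, hd⟩)) (le_ciSup hb ⟨0, hd⟩)

lemma oftrl_ip_add_right {d : ℕ} (u v w : Fin d → ℝ) : ip u (v + w) = ip u v + ip u w := by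
  unfold ip
  rw [← Finset.sum_add_distrib]
  exact Finset.sum_congr rfl fun i _ => by simp [mul_add]

lemma oftrl_ip_sub_right {d : ℕ} (u v w : Fin d → ℝ) : ip u (v - w) = ip u v - ip u w := by
  unfold ip
  rw [← Finset.sum_sub_distrib]
  exact Finset.sum_congr rfl fun i _ => by simp [mul_sub]

lemma oftrl_ip_sub_left {d : ℕ} (u v w : Fin d → ℝ) : ip (u - v) w = ip u w - ip v w := by
  unfold ip
  rw [← Finset.sum_sub_distrib]
  exact Finset.sum_congr rfl fun i _ => by simp [sub_mul]

lemma oftrl_ip_sum_right {d : ℕ} (u : Fin d → ℝ) (s : Finset ℕ) (f : ℕ → Fin d → ℝ) :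
    ip u (∑ t ∈ s, f t) = ∑ t ∈ s, ip u (f t) := by
  unfold ip
  rw [Finset.sum_comm]
  exact Finset.sum_congr rfl fun i _ => by rw [Finset.sum_apply, Finset.mul_sum]

lemma oftrl_sum_Icc_one {M : Type*} [AddCommMonoid M] (f : ℕ → M) (N : ℕ) :
    ∑ t ∈ Finset.Icc 1 N, f t = ∑ i ∈ Finset.range N, f (i + 1) := by
  induction N with
  | zero => simp
  | succ n ih => rw [Finset.sum_Icc_succ_top (by omega) f, ih, Finset.sum_range_succ]

lemma oftrl_term_nonneg (k e c : ℝ) (hk : 0 < k) (he : 0 < e) : 0 ≤ 1 / (k * e) * c ^ 2 :=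
  mul_nonneg (le_of_lt (one_div_pos.mpr (mul_pos hk he))) (sq_nonneg c)

/-- abstract per-round arithmetic. -/
lemma oftrl_aux1 (a b cr S e e' E1 E2 : ℝ) (he : 0 < e) (he' : 0 < e')
    (hcr : cr ≤ a * S) (h1 : a ^ 2 / 2 ≤ E1) (h2 : b ^ 2 / 2 ≤ E2) :
    cr - (1 / e * E1 + 1 / e' * E2)
      ≤ e * S ^ 2 - 1 / (4 * e) * a ^ 2 - 1 / (2 * e') * b ^ 2 := by
  have he0 : e ≠ 0 := ne_of_gt he
  have he'0 : e' ≠ 0 := ne_of_gt he'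
  have hkey : a * S ≤ e * S ^ 2 + 1 / (4 * e) * a ^ 2 := by
    rw [← sub_nonneg]
    have hh : e * S ^ 2 + 1 / (4 * e) * a ^ 2 - a * S
        = 1 / (4 * e) * (a - 2 * e * S) ^ 2 := by
      field_simp; ring
    rw [hh]
    exact mul_nonneg (le_of_lt (one_div_pos.mpr (by linarith))) (sq_nonneg _)
  have hE1 : 2 * (1 / (4 * e) * a ^ 2) ≤ 1 / e * E1 := by
    have halg : 1 / e * (a ^ 2 / 2) = 2 * (1 / (4 * e) * a ^ 2) := by
      field_simp; ring
    have := mul_le_mul_of_nonneg_left h1 (le_of_lt (one_div_pos.mpr he))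
    linarith
  have hE2 : 1 / (2 * e') * b ^ 2 ≤ 1 / e' * E2 := by
    have halg : 1 / e' * (b ^ 2 / 2) = 1 / (2 * e') * b ^ 2 := by
      rw [one_div, one_div, mul_inv]; ring
    have := mul_le_mul_of_nonneg_left h2 (le_of_lt (one_div_pos.mpr he'))
    linarith
  linarith

lemma oftrl_aux2 (a b c e : ℝ) (he : 0 < e) (ha : 0 ≤ a) (hb : 0 ≤ b) (hc : 0 ≤ c)
    (htri : c ≤ a + b) :
    1 / (8 * e) * c ^ 2 ≤ 1 / (4 * e) * a ^ 2 + 1 / (2 * e) * b ^ 2 := by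
  have h8 : 0 < 1 / (8 * e) := one_div_pos.mpr (by linarith)
  have hc2 : c ^ 2 ≤ (a + b) ^ 2 := by nlinarith
  have h1 : 1 / (8 * e) * c ^ 2 ≤ 1 / (8 * e) * (a + b) ^ 2 :=
    mul_le_mul_of_nonneg_left hc2 (le_of_lt h8)
  have h2 : 1 / (4 * e) * a ^ 2 + 1 / (2 * e) * b ^ 2 - 1 / (8 * e) * (a + b) ^ 2
      = 1 / (8 * e) * ((a - b) ^ 2 + 2 * b ^ 2) := by
    field_simp; ring
  nlinarith [sq_nonneg (a - b), sq_nonneg b, h8.le, mul_nonneg h8.le (sq_nonneg (a - b)),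
    mul_nonneg h8.le (sq_nonneg b)]

set_option maxHeartbeats 1000000 in
theorem oftrl_regret_bound
    (d : ℕ) (hd : 0 < d)
    (R : (Fin d → ℝ) → ℝ) (gradR : (Fin d → ℝ) → (Fin d → ℝ))
    (hRnonneg : ∀ x ∈ stdSimplex ℝ (Fin d), 0 ≤ R x)
    -- `R` is 1-strongly convex w.r.t. `‖·‖₁`, expressed via its Bregman divergence
    (hRstrong : ∀ a ∈ stdSimplex ℝ (Fin d), ∀ b ∈ stdSimplex ℝ (Fin d),
      (l1norm (a - b)) ^ 2 / 2 ≤ breg R gradR a b)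
    (η : ℕ → ℝ) (hηpos : ∀ t, 0 < η t) (hηmono : ∀ t, η (t + 1) ≤ η t)
    (g M : ℕ → Fin d → ℝ)
    (q x : ℕ → Fin d → ℝ)
    (hqmem : ∀ t, q (t + 1) ∈ stdSimplex ℝ (Fin d))
    (hxmem : ∀ t ≥ 1, x t ∈ stdSimplex ℝ (Fin d))
    -- optimality of `q (t+1)` for the loss `⟨·, ∑_{s ≤ t} g s⟩ + R/η_t`
    (hqopt : ∀ t, ∀ y ∈ stdSimplex ℝ (Fin d),
      ip (q (t + 1)) (∑ s ∈ Finset.Icc 1 t, g s) + R (q (t + 1)) / η t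
        + (1 / η t) * breg R gradR y (q (t + 1))
      ≤ ip y (∑ s ∈ Finset.Icc 1 t, g s) + R y / η t)
    -- optimality of `x t` for the loss `⟨·, ∑_{s < t} g s + M t⟩ + R/η_t`
    (hxopt : ∀ t ≥ 1, ∀ y ∈ stdSimplex ℝ (Fin d),
      ip (x t) (∑ s ∈ Finset.Icc 1 (t - 1), g s + M t) + R (x t) / η t
        + (1 / η t) * breg R gradR y (x t)
      ≤ ip y (∑ s ∈ Finset.Icc 1 (t - 1), g s + M t) + R y / η t) :
    ∀ T ≥ 1, ∀ z ∈ stdSimplex ℝ (Fin d),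
      ∑ t ∈ Finset.Icc 1 T, ip (x t - z) (g t) ≤
        R z / η (T + 1)
        + ∑ t ∈ Finset.Icc 1 T, η t * (⨆ i, |g t i - M t i|) ^ 2
        - ∑ t ∈ Finset.Icc 1 (T - 1), (1 / (8 * η t)) * (l1norm (x t - x (t + 1))) ^ 2 := by
  intro T hT z hz
  set D : (Fin d → ℝ) → (Fin d → ℝ) → ℝ := breg R gradR with hD
  have hbregnn : ∀ a ∈ stdSimplex ℝ (Fin d), ∀ b ∈ stdSimplex ℝ (Fin d), 0 ≤ D a b := by
    intro a ha b hb
    refine le_trans ?_ (hRstrong a ha b hb)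
    positivity
  set G : ℕ → Fin d → ℝ := fun t => ∑ s ∈ Finset.Icc 1 t, g s with hGdef
  set P : ℕ → ℝ := fun t => ip (q (t + 1)) (G t) + R (q (t + 1)) / η t with hPdef
  set stuff : ℕ → ℝ := fun t =>
    ip (x t) (M t) + ip (q (t + 1)) (g t - M t)
      + (1 / η t) * D (q (t + 1)) (x t) + (1 / η (t - 1)) * D (x t) (q t) with hstuffdef
  -- one-step potential inequality
  have step : ∀ s : ℕ, P s + stuff (s + 1) ≤ P (s + 1) := by
    intro s
    have hx1 : x (s + 1) ∈ stdSimplex ℝ (Fin d) := hxmem (s + 1) (by omega)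
    have h1 : ip (q (s + 1)) (G s) + R (q (s + 1)) / η s
        + (1 / η s) * D (x (s + 1)) (q (s + 1))
        ≤ ip (x (s + 1)) (G s) + R (x (s + 1)) / η s := hqopt s (x (s + 1)) hx1
    have h2 : R (x (s + 1)) / η s ≤ R (x (s + 1)) / η (s + 1) :=
      div_le_div_of_nonneg_left (hRnonneg _ hx1) (hηpos (s + 1)) (hηmono s)
    have h3 : ip (x (s + 1)) (G s + M (s + 1)) + R (x (s + 1)) / η (s + 1)
        + (1 / η (s + 1)) * D (q (s + 1 + 1)) (x (s + 1))
        ≤ ip (q (s + 1 + 1)) (G s + M (s + 1)) + R (q (s + 1 + 1)) / η (s + 1) :=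
      hxopt (s + 1) (by omega) (q (s + 1 + 1)) (hqmem (s + 1))
    have h4 : G (s + 1) = G s + g (s + 1) := by
      simp only [hGdef]
      exact Finset.sum_Icc_succ_top (by omega) g
    show ip (q (s + 1)) (G s) + R (q (s + 1)) / η s
        + (ip (x (s + 1)) (M (s + 1)) + ip (q (s + 1 + 1)) (g (s + 1) - M (s + 1))
          + (1 / η (s + 1)) * D (q (s + 1 + 1)) (x (s + 1))
          + (1 / η (s + 1 - 1)) * D (x (s + 1)) (q (s + 1)))
        ≤ ip (q (s + 1 + 1)) (G (s + 1)) + R (q (s + 1 + 1)) / η (s + 1)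
    rw [h4]
    simp only [Nat.add_sub_cancel, oftrl_ip_add_right, oftrl_ip_sub_right] at h3 ⊢
    linarith [h1, h2, h3]
  -- summed potential inequality
  have chain : ∀ N : ℕ, P 0 + ∑ t ∈ Finset.Icc 1 N, stuff t ≤ P N := by
    intro N
    induction N with
    | zero => simp
    | succ n ih =>
      rw [Finset.sum_Icc_succ_top (by omega) stuff]
      linarith [step n, ih]
  have hP0 : 0 ≤ P 0 := by
    have hG0 : G 0 = 0 := by simp [hGdef]
    have h0 : ip (q 1) (G 0) = 0 := by rw [hG0]; simp [ip]
    have hr : 0 ≤ R (q 1) / η 0 := div_nonneg (hRnonneg _ (hqmem 0)) (hηpos 0).le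
    show 0 ≤ ip (q 1) (G 0) + R (q 1) / η 0
    rw [h0]; linarith
  have hPT : P T ≤ ip z (G T) + R z / η (T + 1) := by
    have h1 : ip (q (T + 1)) (G T) + R (q (T + 1)) / η T + (1 / η T) * D z (q (T + 1))
        ≤ ip z (G T) + R z / η T := hqopt T z hz
    have h2 : 0 ≤ (1 / η T) * D z (q (T + 1)) :=
      mul_nonneg (le_of_lt (one_div_pos.mpr (hηpos T))) (hbregnn z hz _ (hqmem T))
    have h3 : R z / η T ≤ R z / η (T + 1) :=
      div_le_div_of_nonneg_left (hRnonneg _ hz) (hηpos (T + 1)) (hηmono T)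
    show ip (q (T + 1)) (G T) + R (q (T + 1)) / η T ≤ ip z (G T) + R z / η (T + 1)
    linarith
  clear_value D G P stuff
  have key : ∑ t ∈ Finset.Icc 1 T, stuff t ≤ ip z (G T) + R z / η (T + 1) := by
    linarith [chain T, hP0, hPT]
  -- decomposition of the regret
  set cross : ℕ → ℝ := fun t => ip (x t - q (t + 1)) (g t - M t) with hcrossdef
  set negterm : ℕ → ℝ := fun t =>
    (1 / η t) * D (q (t + 1)) (x t) + (1 / η (t - 1)) * D (x t) (q t) with hnegdef
  have hdec : ∀ t, ip (x t - z) (g t) = stuff t - negterm t + cross t - ip z (g t) := by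
    intro t
    simp only [hstuffdef, hnegdef, hcrossdef, oftrl_ip_sub_left, oftrl_ip_sub_right]
    ring
  have hzG : ∑ t ∈ Finset.Icc 1 T, ip z (g t) = ip z (G T) := by
    simp only [hGdef]
    exact (oftrl_ip_sum_right z _ g).symm
  have hsplit : ∑ t ∈ Finset.Icc 1 T, ip (x t - z) (g t)
      = (∑ t ∈ Finset.Icc 1 T, stuff t) - ip z (G T)
        + ∑ t ∈ Finset.Icc 1 T, (cross t - negterm t) := by
    rw [← hzG]
    rw [Finset.sum_congr rfl fun t _ => hdec t]
    rw [Finset.sum_sub_distrib, Finset.sum_sub_distrib, Finset.sum_add_distrib,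
      Finset.sum_sub_distrib]
    ring
  -- named per-round quantities
  set S : ℕ → ℝ := fun t => ⨆ i, |g t i - M t i| with hSdef
  set A : ℕ → ℝ := fun t => 1 / (4 * η t) * (l1norm (x t - q (t + 1))) ^ 2 with hAdef
  set B : ℕ → ℝ := fun s => 1 / (2 * η s) * (l1norm (x (s + 1) - q (s + 1))) ^ 2 with hBdef
  set C : ℕ → ℝ := fun t => 1 / (8 * η t) * (l1norm (x t - x (t + 1))) ^ 2 with hCdef
  -- per-round bound on cross - negterm
  have perround : ∀ t ∈ Finset.Icc 1 T,
      cross t - negterm t ≤ η t * S t ^ 2 - A t - B (t - 1) := by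
    intro t htmem
    have ht1 : 1 ≤ t := (Finset.mem_Icc.mp htmem).1
    obtain ⟨s, rfl⟩ : ∃ s, t = s + 1 := ⟨t - 1, by omega⟩
    have hx1 : x (s + 1) ∈ stdSimplex ℝ (Fin d) := hxmem (s + 1) (by omega)
    have hcr : ip (x (s + 1) - q (s + 1 + 1)) (g (s + 1) - M (s + 1))
        ≤ l1norm (x (s + 1) - q (s + 1 + 1)) * (⨆ i, |g (s + 1) i - M (s + 1) i|) := by
      have h := oftrl_ip_holder hd (x (s + 1) - q (s + 1 + 1)) (g (s + 1) - M (s + 1))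
      simpa only [Pi.sub_apply] using h
    have h1 : (l1norm (x (s + 1) - q (s + 1 + 1))) ^ 2 / 2
        ≤ D (q (s + 1 + 1)) (x (s + 1)) := by
      have h := hRstrong (q (s + 1 + 1)) (hqmem (s + 1)) (x (s + 1)) hx1
      rwa [oftrl_l1norm_sub_symm] at h
    have h2 : (l1norm (x (s + 1) - q (s + 1))) ^ 2 / 2
        ≤ D (x (s + 1)) (q (s + 1)) := hRstrong (x (s + 1)) hx1 (q (s + 1)) (hqmem s)
    show cross (s + 1) - negterm (s + 1)
        ≤ η (s + 1) * S (s + 1) ^ 2 - A (s + 1) - B (s + 1 - 1)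
    simp only [hcrossdef, hnegdef, hSdef, hAdef, hBdef, Nat.add_sub_cancel]
    exact oftrl_aux1 _ _ _ _ _ _ _ _ (hηpos (s + 1)) (hηpos s) hcr h1 h2
  -- triangle inequality combination
  have hCAB : ∀ t : ℕ, C (t + 1) ≤ A (t + 1) + B (t + 1) := by
    intro t
    have htri : l1norm (x (t + 1) - x (t + 1 + 1))
        ≤ l1norm (x (t + 1) - q (t + 1 + 1)) + l1norm (x (t + 1 + 1) - q (t + 1 + 1)) := by
      have h := oftrl_l1norm_tri (x (t + 1)) (q (t + 1 + 1)) (x (t + 1 + 1))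
      rwa [oftrl_l1norm_sub_symm (q (t + 1 + 1)) (x (t + 1 + 1))] at h
    show C (t + 1) ≤ A (t + 1) + B (t + 1)
    simp only [hCdef, hAdef, hBdef]
    exact oftrl_aux2 _ _ _ _ (hηpos (t + 1)) (oftrl_l1norm_nonneg _) (oftrl_l1norm_nonneg _)
      (oftrl_l1norm_nonneg _) htri
  -- index-shifted sum comparison
  obtain ⟨N, rfl⟩ : ∃ N, T = N + 1 := ⟨T - 1, by omega⟩
  have hsumC : ∑ t ∈ Finset.Icc 1 (N + 1 - 1), C t ≤
      (∑ t ∈ Finset.Icc 1 (N + 1), A t) + ∑ t ∈ Finset.Icc 1 (N + 1), B (t - 1) := by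
    have e1 : ∑ t ∈ Finset.Icc 1 (N + 1), A t = ∑ i ∈ Finset.range (N + 1), A (i + 1) :=
      oftrl_sum_Icc_one A (N + 1)
    have e2 : ∑ t ∈ Finset.Icc 1 (N + 1), B (t - 1) = ∑ i ∈ Finset.range (N + 1), B i := by
      rw [oftrl_sum_Icc_one (fun t => B (t - 1)) (N + 1)]
      exact Finset.sum_congr rfl fun i _ => by simp
    have e3 : ∑ t ∈ Finset.Icc 1 (N + 1 - 1), C t = ∑ i ∈ Finset.range N, C (i + 1) := by
      simp only [Nat.add_sub_cancel]
      exact oftrl_sum_Icc_one C N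
    rw [e1, e2, e3, Finset.sum_range_succ (fun i => A (i + 1)) N, Finset.sum_range_succ' B N]
    have hApos : 0 ≤ A (N + 1) := by
      simp only [hAdef]
      exact oftrl_term_nonneg 4 (η (N + 1)) _ (by norm_num) (hηpos (N + 1))
    have hBpos : 0 ≤ B 0 := by
      simp only [hBdef]
      exact oftrl_term_nonneg 2 (η 0) _ (by norm_num) (hηpos 0)
    have hterm : ∑ i ∈ Finset.range N, C (i + 1)
        ≤ (∑ i ∈ Finset.range N, A (i + 1)) + ∑ i ∈ Finset.range N, B (i + 1) := by
      rw [← Finset.sum_add_distrib]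
      exact Finset.sum_le_sum fun i _ => hCAB i
    linarith
  have hsum2 : ∑ t ∈ Finset.Icc 1 (N + 1), (cross t - negterm t)
      ≤ (∑ t ∈ Finset.Icc 1 (N + 1), η t * S t ^ 2)
        - ∑ t ∈ Finset.Icc 1 (N + 1 - 1), C t := by
    have h1 : ∑ t ∈ Finset.Icc 1 (N + 1), (cross t - negterm t)
        ≤ ∑ t ∈ Finset.Icc 1 (N + 1), (η t * S t ^ 2 - A t - B (t - 1)) :=
      Finset.sum_le_sum perround
    have h2 : ∑ t ∈ Finset.Icc 1 (N + 1), (η t * S t ^ 2 - A t - B (t - 1))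
        = (∑ t ∈ Finset.Icc 1 (N + 1), η t * S t ^ 2)
          - (∑ t ∈ Finset.Icc 1 (N + 1), A t) - ∑ t ∈ Finset.Icc 1 (N + 1), B (t - 1) := by
      rw [Finset.sum_sub_distrib, Finset.sum_sub_distrib]
    linarith [hsumC]
  have final : ∑ t ∈ Finset.Icc 1 (N + 1), ip (x t - z) (g t)
      ≤ R z / η (N + 1 + 1) + (∑ t ∈ Finset.Icc 1 (N + 1), η t * S t ^ 2)
        - ∑ t ∈ Finset.Icc 1 (N + 1 - 1), C t := by
    rw [hsplit]
    linarith [key, hsum2]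
  simp only [hSdef, hCdef] at final
  exact final
end

section
/- Let H ≥ 1, α_k = (H+1)/(H+k), α_k^t = α_t ∏_{i=t+1}^k(1−α_i). Then ∑_{t=1}^k α_k^t α_t² H² ≤ (H+1)³/k for all k ≥ 1. -/
/-!
Write `A_k = ∑_{t ≤ k} α_k^t α_t² H²`. Since `α_{k+1}^t = (1 - α_{k+1}) α_k^t` for `t ≤ k` and
`α_{k+1}^{k+1} = α_{k+1}`, the sums obey `A_{k+1} = (1 - α_{k+1}) A_k + α_{k+1}³ H²`, and the bound
`(H+1)³/k` propagates along this recursion: with `D = H + k + 1`, the step reduces to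
`H² / D³ ≤ 1/(k+1) - 1/D = H / ((k+1) D)`, i.e. `H (k+1) ≤ D²`.
-/

open Finset

section LearningRateWeight

variable {R : Type*} [CommRing R]

def learningRateWeight (α : ℕ → R) (k t : ℕ) : R :=
  α t * ∏ i ∈ Icc (t + 1) k, (1 - α i)

theorem learningRateWeight_self (α : ℕ → R) (k : ℕ) : learningRateWeight α k k = α k := by
  simp [learningRateWeight]

theorem learningRateWeight_succ_of_le (α : ℕ → R) {k t : ℕ} (h : t ≤ k) :
    learningRateWeight α (k + 1) t = (1 - α (k + 1)) * learningRateWeight α k t := by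
  rw [learningRateWeight, learningRateWeight, prod_Icc_succ_top (by omega)]
  ring

theorem sum_learningRateWeight_succ (α f : ℕ → R) (k : ℕ) :
    ∑ t ∈ Icc 1 (k + 1), learningRateWeight α (k + 1) t * f t =
      (1 - α (k + 1)) * ∑ t ∈ Icc 1 k, learningRateWeight α k t * f t + α (k + 1) * f (k + 1) := by
  rw [sum_Icc_succ_top (by omega), learningRateWeight_self, mul_sum]
  congr 1
  refine sum_congr rfl fun t ht => ?_
  rw [learningRateWeight_succ_of_le α (mem_Icc.1 ht).2, mul_assoc]

end LearningRateWeight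

theorem inv_add_sq_div_cube_le {x K : ℝ} (hx : 0 ≤ x) (hK : 0 ≤ K) :
    1 / (x + (K + 1)) + x ^ 2 / (x + (K + 1)) ^ 3 ≤ 1 / (K + 1) := by
  have hD : 0 < x + (K + 1) := by positivity
  have hx_mul : x * (K + 1) ≤ (x + (K + 1)) ^ 2 := by nlinarith
  rw [div_add_div _ _ hD.ne' (by positivity), div_le_div_iff₀ (by positivity) (by positivity)]
  nlinarith [mul_le_mul_of_nonneg_left hx_mul hx]

theorem cube_bound_step {x K : ℝ} (hx : 0 ≤ x) (hK : 0 < K) :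
    (1 - (x + 1) / (x + (K + 1))) * ((x + 1) ^ 3 / K) +
        (x + 1) / (x + (K + 1)) * (((x + 1) / (x + (K + 1))) ^ 2 * x ^ 2) ≤
      (x + 1) ^ 3 / (K + 1) := by
  have hD : 0 < x + (K + 1) := by positivity
  calc _ = (x + 1) ^ 3 * (1 / (x + (K + 1)) + x ^ 2 / (x + (K + 1)) ^ 3) := by
        field_simp; ring
    _ ≤ (x + 1) ^ 3 * (1 / (K + 1)) := by gcongr; exact inv_add_sq_div_cube_le hx hK.le
    _ = _ := mul_one_div _ _

theorem weighted_alpha_sq_H_bound_general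
    (H : ℕ)
    (α : ℕ → ℝ) (hα : ∀ k, α k = (H + 1 : ℝ) / (H + k))
    (αw : ℕ → ℕ → ℝ)
    (hαw : ∀ k t, αw k t = α t * ∏ i ∈ Finset.Icc (t + 1) k, (1 - α i)) :
    ∀ k ≥ 1, ∑ t ∈ Finset.Icc 1 k, αw k t * (α t) ^ 2 * (H : ℝ) ^ 2 ≤
      (H + 1 : ℝ) ^ 3 / k := by
  obtain rfl : αw = learningRateWeight α := funext fun k => funext (hαw k)
  have hα_succ (k : ℕ) : α (k + 1) = (H + 1 : ℝ) / (H + ((k : ℝ) + 1)) := by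
    rw [hα]; push_cast; rfl
  intro k hk
  simp_rw [mul_assoc]
  induction k, hk using Nat.le_induction with
  | base =>
    have hα_one : α 1 = 1 := by rw [hα]; push_cast; exact div_self (by positivity)
    rw [sum_learningRateWeight_succ, zero_add, Icc_eq_empty (by omega), sum_empty, hα_one]
    norm_num
    nlinarith [(Nat.cast_nonneg H : (0 : ℝ) ≤ H)]
  | succ k hk ih =>
    have hα_le : α (k + 1) ≤ 1 := by
      rw [hα_succ, div_le_one (by positivity)]; linarith [(Nat.cast_nonneg k : (0 : ℝ) ≤ k)]
    rw [sum_learningRateWeight_succ]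
    push_cast
    calc _ ≤ (1 - α (k + 1)) * ((H + 1 : ℝ) ^ 3 / k) + α (k + 1) * (α (k + 1) ^ 2 * H ^ 2) := by
          gcongr
      _ ≤ _ := by rw [hα_succ]; exact cube_bound_step (Nat.cast_nonneg H) (by positivity)

theorem weighted_alpha_sq_H_bound
    (H : ℕ) (hH : 1 ≤ H)
    (α : ℕ → ℝ) (hα : ∀ k, α k = (H + 1 : ℝ) / (H + k))
    (αw : ℕ → ℕ → ℝ)
    (hαw : ∀ k t, αw k t = α t * ∏ i ∈ Finset.Icc (t + 1) k, (1 - α i)) :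
    ∀ k ≥ 1, ∑ t ∈ Finset.Icc 1 k, αw k t * (α t) ^ 2 * (H : ℝ) ^ 2 ≤
      (H + 1 : ℝ) ^ 3 / k :=
  weighted_alpha_sq_H_bound_general H α hα αw hαw
end
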